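/- arXiv:2512.11384 — 11 statements merged into one kernel-verified Lean document; each statement's English description precedes it below -/
import Mathlib

section
/- For the Lotka-Volterra system ẋ = diag(x)A(x - 1ₙ) on the interior of the positive orthant with b ≠ 0, the function V(x) = (kᵀ(x - 1ₙ) - 1/b)·∏ᵢ xᵢ^{b kᵢ} + 1/b satisfies V̇(x) = (x - 1ₙ)ᵀ ((diag(k) + b k kᵀ)A)ˢ (x - 1ₙ) · ∏ᵢ xᵢ^{b kᵢ}. -/
/-!
On the open orthant `∏ᵢ xᵢ^{b kᵢ} = exp (b ∑ᵢ kᵢ log xᵢ)`, so its derivative along the vector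
field `xᵢ uᵢ` with `u = A(x - 1ₙ)` is that product times `b kᵀu`: the factor `xᵢ` cancels against
`1/xᵢ`. The Leibniz rule then leaves `(kᵀ(x∘u) + b kᵀ(x - 1ₙ) kᵀu - kᵀu) ∏ᵢ xᵢ^{b kᵢ}`, which is the
quadratic form of `(diag(k) + b k kᵀ)A` at `x - 1ₙ`, and a quadratic form only sees the symmetric
part of its matrix.
-/

open Matrix

namespace Matrix

variable {ι R : Type*} [Fintype ι]

theorem dotProduct_half_smul_add_transpose_mulVec_self [Field R] [CharZero R]
    (M : Matrix ι ι R) (y : ι → R) :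
    y ⬝ᵥ ((1 / 2 : R) • (M + Mᵀ)) *ᵥ y = y ⬝ᵥ M *ᵥ y := by
  have hT : y ⬝ᵥ Mᵀ *ᵥ y = y ⬝ᵥ M *ᵥ y := by
    rw [dotProduct_mulVec, vecMul_transpose, dotProduct_comm]
  rw [smul_mulVec, add_mulVec, dotProduct_smul, dotProduct_add, hT, smul_eq_mul]
  ring

theorem dotProduct_diagonal_add_smul_vecMulVec_mulVec [CommRing R] [DecidableEq ι]
    (k y u : ι → R) (b : R) :
    y ⬝ᵥ (diagonal k + b • vecMulVec k k) *ᵥ u = (k * y) ⬝ᵥ u + b * (k ⬝ᵥ y) * (k ⬝ᵥ u) := by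
  have hdiag : y ⬝ᵥ diagonal k *ᵥ u = (k * y) ⬝ᵥ u := by
    simp only [dotProduct, mulVec_diagonal, Pi.mul_apply]
    exact Finset.sum_congr rfl fun i _ => by ring
  rw [add_mulVec, smul_mulVec, vecMulVec_mulVec, dotProduct_add, dotProduct_smul, dotProduct_smul,
    hdiag, MulOpposite.smul_eq_mul_unop, MulOpposite.unop_op, smul_eq_mul, dotProduct_comm y k]
  ring

end Matrix

section

variable {ι : Type*} [Fintype ι]

theorem hasFDerivAt_dotProduct_sub {𝕜 : Type*} [NontriviallyNormedField 𝕜] (k a x : ι → 𝕜) :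
    HasFDerivAt (fun y : ι → 𝕜 => k ⬝ᵥ (y - a))
      (∑ i, k i • (ContinuousLinearMap.proj i : (ι → 𝕜) →L[𝕜] 𝕜)) x := by
  simp only [dotProduct]
  exact HasFDerivAt.fun_sum fun i _ =>
    ((ContinuousLinearMap.proj i : (ι → 𝕜) →L[𝕜] 𝕜).hasFDerivAt.sub_const (a i)).const_mul (k i)

theorem Real.prod_rpow_eq_exp_sum_mul_log {x : ι → ℝ} (hx : ∀ i, 0 < x i) (c : ι → ℝ) :
    ∏ i, x i ^ c i = Real.exp (∑ i, c i * Real.log (x i)) := by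
  rw [Real.exp_sum]
  exact Finset.prod_congr rfl fun i _ => by rw [Real.rpow_def_of_pos (hx i), mul_comm]

theorem hasFDerivAt_prod_rpow {x : ι → ℝ} (hx : ∀ i, 0 < x i) (c : ι → ℝ) :
    HasFDerivAt (fun y : ι → ℝ => ∏ i, y i ^ c i)
      ((∏ i, x i ^ c i) • ∑ i, (c i / x i) • (ContinuousLinearMap.proj i : (ι → ℝ) →L[ℝ] ℝ)) x := by
  have hpos : ∀ᶠ y in nhds x, ∀ i, 0 < y i := by
    simpa only [Filter.eventually_all] using
      fun i => ((continuous_apply i).tendsto x).eventually_const_lt (hx i)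
  have hlog : HasFDerivAt (fun y : ι → ℝ => ∑ i, c i * Real.log (y i))
      (∑ i, (c i / x i) • (ContinuousLinearMap.proj i : (ι → ℝ) →L[ℝ] ℝ)) x := by
    refine HasFDerivAt.fun_sum fun i _ => ?_
    have := ((Real.hasDerivAt_log (hx i).ne').comp_hasFDerivAt x
      (ContinuousLinearMap.proj i : (ι → ℝ) →L[ℝ] ℝ).hasFDerivAt).const_mul (c i)
    rwa [div_eq_mul_inv, ← smul_smul]
  rw [Real.prod_rpow_eq_exp_sum_mul_log hx]
  exact ((Real.hasDerivAt_exp _).comp_hasFDerivAt x hlog).congr_of_eventuallyEq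
    (hpos.mono fun y hy => Real.prod_rpow_eq_exp_sum_mul_log hy c)

end

/-- For ẋ = diag(x)A(x - 1ₙ) with b ≠ 0, the function
V(x) = (kᵀ(x-1ₙ) - 1/b)·∏ᵢ xᵢ^{b kᵢ} + 1/b satisfies
V̇(x) = (x-1ₙ)ᵀ ((diag(k) + b k kᵀ)A)ˢ (x-1ₙ) · ∏ᵢ xᵢ^{b kᵢ}. -/
theorem stmt1 (n : ℕ) (A : Matrix (Fin n) (Fin n) ℝ) (k : Fin n → ℝ) (b : ℝ) (hb : b ≠ 0)
    (V : (Fin n → ℝ) → ℝ)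
    (hV : ∀ x : Fin n → ℝ,
      V x = (k ⬝ᵥ (x - 1) - 1/b) * ∏ i, (x i) ^ (b * k i) + 1/b)
    (F : (Fin n → ℝ) → (Fin n → ℝ))
    (hF : ∀ x : Fin n → ℝ, F x = fun i => x i * (A *ᵥ (x - 1)) i)
    (R : Matrix (Fin n) (Fin n) ℝ)
    (hR : R = (1/2 : ℝ) •
      ((Matrix.diagonal k + b • Matrix.vecMulVec k k) * A
        + ((Matrix.diagonal k + b • Matrix.vecMulVec k k) * A)ᵀ)) :
    ∀ x : Fin n → ℝ, (∀ i, 0 < x i) →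
      fderiv ℝ V x (F x) = ((x - 1) ⬝ᵥ (R *ᵥ (x - 1))) * ∏ i, (x i) ^ (b * k i) := by
  intro x hx
  set u := A *ᵥ (x - 1)
  have hFx : F x = x * u := hF x
  have hV' : HasFDerivAt V _ x := funext hV ▸
    (((hasFDerivAt_dotProduct_sub k 1 x).sub_const (1 / b)).mul
      (hasFDerivAt_prod_rpow hx fun i => b * k i)).add_const (1 / b)
  have hlog : ∑ i, b * k i / x i * F x i = b * (k ⬝ᵥ u) := by
    simp only [hFx, dotProduct, Pi.mul_apply, Finset.mul_sum]
    exact Finset.sum_congr rfl fun i _ => by field_simp [(hx i).ne']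
  have hlin : k ⬝ᵥ F x = (k * (x - 1)) ⬝ᵥ u + k ⬝ᵥ u := by
    simp only [hFx, dotProduct, Pi.mul_apply, Pi.sub_apply, Pi.one_apply, ← Finset.sum_add_distrib]
    exact Finset.sum_congr rfl fun i _ => by ring
  rw [hV'.fderiv, hR, dotProduct_half_smul_add_transpose_mulVec_self, ← mulVec_mulVec,
    dotProduct_diagonal_add_smul_vecMulVec_mulVec]
  simp only [_root_.add_apply, _root_.smul_apply, _root_.sum_apply,
    ContinuousLinearMap.proj_apply, smul_eq_mul]
  rw [hlog, ← dotProduct, hlin]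
  field_simp
  ring
end

section
/- Suppose A ∈ ℝ^{n×n}, p, β ∈ ℝⁿ, κ, μ > 0, g ≥ 0 satisfy (diag(p)A + (β - g p)pᵀ)ˢ = 0 and Aᵀp = -(μ - gκ)p - κβ. Then along the flow ẋ = diag(x)A(x - 1ₙ), the function S(x) = pᵀ(x - 1ₙ) + κ satisfies Ṡ = -S·βᵀx + gS² - (μ - βᵀ1ₙ + gκ)S + κμ for all x in the interior of the positive orthant. -/
open Matrix

/-- Under (diag(p)A + (β - g p)pᵀ)ˢ = 0 and Aᵀp = -(μ-gκ)p - κβ,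
along ẋ = diag(x)A(x-1ₙ) the function S(x) = pᵀ(x-1ₙ) + κ satisfies
Ṡ = -S βᵀx + gS² - (μ - βᵀ1ₙ + gκ)S + κμ on the interior of the positive orthant. -/
theorem stmt2 (n : ℕ) (A : Matrix (Fin n) (Fin n) ℝ) (p β : Fin n → ℝ)
    (κ μ g : ℝ) (hκ : 0 < κ) (hμ : 0 < μ) (hg : 0 ≤ g)
    (h1 : (1/2 : ℝ) • ((Matrix.diagonal p * A + Matrix.vecMulVec (β - g • p) p)
        + (Matrix.diagonal p * A + Matrix.vecMulVec (β - g • p) p)ᵀ) = 0)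
    (h2 : Aᵀ *ᵥ p = -(μ - g * κ) • p - κ • β)
    (S : (Fin n → ℝ) → ℝ)
    (hS : ∀ x : Fin n → ℝ, S x = p ⬝ᵥ (x - 1) + κ)
    (F : (Fin n → ℝ) → (Fin n → ℝ))
    (hF : ∀ x : Fin n → ℝ, F x = fun i => x i * (A *ᵥ (x - 1)) i) :
    ∀ x : Fin n → ℝ, (∀ i, 0 < x i) →
      fderiv ℝ S x (F x)
        = -(S x) * (β ⬝ᵥ x) + g * (S x)^2 - (μ - β ⬝ᵥ (1 : Fin n → ℝ) + g * κ) * S x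
          + κ * μ := by
  intro x hx
  classical
  set L : (Fin n → ℝ) →L[ℝ] ℝ := ∑ i, p i • (ContinuousLinearMap.proj i) with hLdef
  have hL : ∀ v, L v = p ⬝ᵥ v := by
    intro v
    simp [hLdef, dotProduct, ContinuousLinearMap.sum_apply]
  have hSfun : S = fun z => L z + (κ - p ⬝ᵥ (1 : Fin n → ℝ)) := by
    funext z
    rw [hS z, hL, dotProduct_sub]
    ring
  have hder : HasFDerivAt S L x := by
    rw [hSfun]
    exact (L.hasFDerivAt).add_const _
  rw [hder.fderiv, hL]
  -- algebra
  set y : Fin n → ℝ := x - 1 with hy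
  set w : Fin n → ℝ := A *ᵥ y with hw
  set M := Matrix.diagonal p * A + Matrix.vecMulVec (β - g • p) p with hMdef
  have hM0 : M + Mᵀ = 0 := by
    have := congrArg (fun X => (2:ℝ) • X) h1
    simpa [smul_smul] using this
  have hq : y ⬝ᵥ (M *ᵥ y) = 0 := by
    have ha : y ⬝ᵥ ((M + Mᵀ) *ᵥ y) = 0 := by rw [hM0]; simp
    have hb : y ⬝ᵥ (Mᵀ *ᵥ y) = y ⬝ᵥ (M *ᵥ y) := by
      rw [Matrix.mulVec_transpose, dotProduct_comm, ← Matrix.dotProduct_mulVec]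
    rw [Matrix.add_mulVec, dotProduct_add, hb] at ha
    linarith
  have hvmv : Matrix.vecMulVec (β - g • p) p *ᵥ y = (p ⬝ᵥ y) • (β - g • p) := by
    funext i
    simp [Matrix.vecMulVec, Matrix.mulVec, dotProduct, Finset.mul_sum, mul_comm, mul_assoc,
      mul_left_comm]
  have hQ : y ⬝ᵥ ((Matrix.diagonal p * A) *ᵥ y)
      = -((p ⬝ᵥ y) * (β ⬝ᵥ y)) + g * (p ⬝ᵥ y)^2 := by
    have : y ⬝ᵥ ((Matrix.diagonal p * A) *ᵥ y)
        + (p ⬝ᵥ y) * (y ⬝ᵥ (β - g • p)) = 0 := by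
      have := hq
      rw [hMdef, Matrix.add_mulVec, dotProduct_add, hvmv, dotProduct_smul] at this
      simpa [smul_eq_mul] using this
    have hyb : y ⬝ᵥ (β - g • p) = y ⬝ᵥ β - g * (y ⬝ᵥ p) := by
      simp [dotProduct_sub, dotProduct_smul]
    rw [hyb] at this
    have hc1 : y ⬝ᵥ β = β ⬝ᵥ y := dotProduct_comm _ _
    have hc2 : y ⬝ᵥ p = p ⬝ᵥ y := dotProduct_comm _ _
    rw [hc1, hc2] at this
    nlinarith [this]
  have hdiag : (Matrix.diagonal p * A) *ᵥ y = fun i => p i * w i := by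
    funext i
    rw [← Matrix.mulVec_mulVec]
    simp [Matrix.mulVec, Matrix.diagonal, dotProduct, hw]
  have hmain : p ⬝ᵥ F x = y ⬝ᵥ ((Matrix.diagonal p * A) *ᵥ y) + p ⬝ᵥ w := by
    rw [hF, hdiag]
    have hx1 : ∀ i, x i = y i + 1 := fun i => by simp [hy]
    simp only [dotProduct]
    rw [← Finset.sum_add_distrib]
    apply Finset.sum_congr rfl
    intro i _
    rw [hx1 i]
    ring
  have hLt : p ⬝ᵥ w = -(μ - g * κ) * (p ⬝ᵥ y) - κ * (β ⬝ᵥ y) := by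
    rw [hw, Matrix.dotProduct_mulVec, ← Matrix.mulVec_transpose, h2]
    simp [sub_dotProduct, smul_dotProduct]
  have hbx : β ⬝ᵥ x = β ⬝ᵥ y + β ⬝ᵥ (1 : Fin n → ℝ) := by
    have : β ⬝ᵥ y = β ⬝ᵥ x - β ⬝ᵥ (1 : Fin n → ℝ) := by
      rw [hy, dotProduct_sub]
    linarith
  have hSx : S x = p ⬝ᵥ y + κ := by rw [hS x, hy]
  rw [hmain, hQ, hLt, hSx, hbx]
  ring
end

section
/- Suppose A ∈ ℝ^{n×n}, p, β ∈ ℝⁿ, κ, μ > 0, g ≥ 0 satisfy (diag(p)A + (β - g p)pᵀ)ˢ = 0 and Aᵀp = -(μ - gκ)p - κβ. Then along the flow ẋ = diag(x)A(x - 1ₙ), the quantity S(x) = pᵀ(x - 1ₙ) + κ satisfies Ṡ = -S(β - gp)ᵀ(x - 1ₙ) - μ(S - κ) on the interior of the positive orthant. -/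
/-!
With `y = x - 1` the flow gives `Ṡ = pᵀ diag(x) A y`, and splitting `x = y + 1` yields
`Ṡ = yᵀ diag(p) A y + (Aᵀp)ᵀ y`. The symmetric part of `M = diag(p)A + (β - gp)pᵀ`
vanishes, so the quadratic form `yᵀ M y` is zero and `yᵀ diag(p) A y = -((β - gp)ᵀy)(pᵀy)`;
the second term is read off the prescribed value of `Aᵀp`, and `pᵀy = S - κ`.
-/

open Matrix

variable {ι : Type*} [Fintype ι]

theorem fderiv_dotProduct_sub_add (p c : ι → ℝ) (κ : ℝ) (x v : ι → ℝ) :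
    fderiv ℝ (fun x => p ⬝ᵥ (x - c) + κ) x v = p ⬝ᵥ v := by
  let L : (ι → ℝ) →L[ℝ] ℝ := (dotProductBilin ℝ ℝ p).toContinuousLinearMap
  have hS : (fun x => p ⬝ᵥ (x - c) + κ) = fun x => L x + (κ - p ⬝ᵥ c) := by
    funext x
    simp only [L, LinearMap.coe_toContinuousLinearMap', dotProductBilin_apply_apply,
      dotProduct_sub]
    ring
  rw [hS, fderiv_add_const, L.fderiv]
  rfl

section
variable {R : Type*} [CommRing R]

theorem dotProduct_mulVec_self_eq_zero_of_add_transpose_eq_zero [NoZeroDivisors R]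
    [CharZero R] {M : Matrix ι ι R} (hM : M + Mᵀ = 0) (y : ι → R) : y ⬝ᵥ (M *ᵥ y) = 0 := by
  have h : y ⬝ᵥ ((M + Mᵀ) *ᵥ y) = 2 * (y ⬝ᵥ (M *ᵥ y)) := by
    rw [add_mulVec, dotProduct_add, mulVec_transpose, dotProduct_comm y (y ᵥ* M),
      ← dotProduct_mulVec]
    ring
  simpa [hM] using h.symm

theorem dotProduct_vecMulVec_mulVec (u v y : ι → R) :
    y ⬝ᵥ (vecMulVec u v *ᵥ y) = (u ⬝ᵥ y) * (v ⬝ᵥ y) := by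
  rw [vecMulVec_mulVec]; simp [dotProduct_comm, mul_comm]

theorem dotProduct_mul_mulVec_sub_one [DecidableEq ι] (p x : ι → R) (A : Matrix ι ι R) :
    p ⬝ᵥ (x * (A *ᵥ (x - 1))) =
      (x - 1) ⬝ᵥ ((diagonal p * A) *ᵥ (x - 1)) + p ⬝ᵥ (A *ᵥ (x - 1)) := by
  rw [← mulVec_mulVec]
  simp only [dotProduct, mulVec_diagonal, Pi.mul_apply, Pi.sub_apply, Pi.one_apply,
    ← Finset.sum_add_distrib]
  exact Finset.sum_congr rfl fun i _ => by ring
end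

theorem stmt3_general (n : ℕ) (A : Matrix (Fin n) (Fin n) ℝ) (p β : Fin n → ℝ)
    (κ μ g : ℝ)
    (h1 : (1/2 : ℝ) • ((Matrix.diagonal p * A + Matrix.vecMulVec (β - g • p) p)
        + (Matrix.diagonal p * A + Matrix.vecMulVec (β - g • p) p)ᵀ) = 0)
    (h2 : Aᵀ *ᵥ p = -(μ - g * κ) • p - κ • β)
    (S : (Fin n → ℝ) → ℝ)
    (hS : ∀ x : Fin n → ℝ, S x = p ⬝ᵥ (x - 1) + κ)
    (F : (Fin n → ℝ) → (Fin n → ℝ))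
    (hF : ∀ x : Fin n → ℝ, F x = fun i => x i * (A *ᵥ (x - 1)) i) :
    ∀ x : Fin n → ℝ, (∀ i, 0 < x i) →
      fderiv ℝ S x (F x)
        = -(S x) * ((β - g • p) ⬝ᵥ (x - 1)) - μ * (S x - κ) := by
  intro x _
  have hskew := (smul_eq_zero.mp h1).resolve_left (by norm_num)
  have hquad := dotProduct_mulVec_self_eq_zero_of_add_transpose_eq_zero hskew (x - 1)
  rw [add_mulVec, dotProduct_add, dotProduct_vecMulVec_mulVec] at hquad
  have hlin : p ⬝ᵥ (A *ᵥ (x - 1)) = (Aᵀ *ᵥ p) ⬝ᵥ (x - 1) := by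
    rw [dotProduct_mulVec, mulVec_transpose]
  obtain rfl : S = fun x => p ⬝ᵥ (x - 1) + κ := funext hS
  rw [fderiv_dotProduct_sub_add, hF,
    show (fun i => x i * (A *ᵥ (x - 1)) i) = x * (A *ᵥ (x - 1)) from rfl,
    dotProduct_mul_mulVec_sub_one, hlin, h2]
  simp only [sub_dotProduct, smul_dotProduct, neg_smul, neg_dotProduct, smul_eq_mul] at hquad ⊢
  linear_combination hquad

/-- Under (diag(p)A + (β - g p)pᵀ)ˢ = 0 and Aᵀp = -(μ-gκ)p - κβ,
along ẋ = diag(x)A(x-1ₙ) the quantity S(x) = pᵀ(x-1ₙ) + κ satisfies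
Ṡ = -S(β - gp)ᵀ(x-1ₙ) - μ(S - κ) on the interior of the positive orthant. -/
theorem stmt3 (n : ℕ) (A : Matrix (Fin n) (Fin n) ℝ) (p β : Fin n → ℝ)
    (κ μ g : ℝ) (hκ : 0 < κ) (hμ : 0 < μ) (hg : 0 ≤ g)
    (h1 : (1/2 : ℝ) • ((Matrix.diagonal p * A + Matrix.vecMulVec (β - g • p) p)
        + (Matrix.diagonal p * A + Matrix.vecMulVec (β - g • p) p)ᵀ) = 0)
    (h2 : Aᵀ *ᵥ p = -(μ - g * κ) • p - κ • β)
    (S : (Fin n → ℝ) → ℝ)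
    (hS : ∀ x : Fin n → ℝ, S x = p ⬝ᵥ (x - 1) + κ)
    (F : (Fin n → ℝ) → (Fin n → ℝ))
    (hF : ∀ x : Fin n → ℝ, F x = fun i => x i * (A *ᵥ (x - 1)) i) :
    ∀ x : Fin n → ℝ, (∀ i, 0 < x i) →
      fderiv ℝ S x (F x)
        = -(S x) * ((β - g • p) ⬝ᵥ (x - 1)) - μ * (S x - κ) :=
  stmt3_general n A p β κ μ g h1 h2 S hS F hF
end

section
/- Under the hypotheses (diag(p)A + (β - gp)pᵀ)ˢ = 0 and Aᵀp = -(μ - gκ)p - κβ with κ, μ > 0, g ≥ 0, the function L(x) = S(x) - κ - κ ln(S(x)/κ), where S(x) = pᵀ(x - 1ₙ) + κ, satisfies along the flow ẋ = diag(x)A(x - 1ₙ): L̇(x) = -μ(pᵀ(x - 1ₙ))²/(pᵀ(x - 1ₙ) + κ) + (x - 1ₙ)ᵀdiag(p)A(x - 1ₙ), for all x in the interior of the positive orthant with pᵀ(x - 1ₙ) + κ > 0. -/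
open Matrix

/-- Under the hypotheses (diag(p)A + (β - gp)pᵀ)ˢ = 0 and
Aᵀp = -(μ-gκ)p - κβ with κ, μ > 0, g ≥ 0, the function
L(x) = S(x) - κ - κ ln(S(x)/κ) (S(x) = pᵀ(x-1ₙ)+κ) satisfies along ẋ = diag(x)A(x-1ₙ):
L̇(x) = -μ(pᵀ(x-1ₙ))²/(pᵀ(x-1ₙ)+κ) + (x-1ₙ)ᵀ diag(p)A (x-1ₙ), whenever
x is in the positive orthant and pᵀ(x-1ₙ)+κ > 0. -/
theorem stmt4 (n : ℕ) (A : Matrix (Fin n) (Fin n) ℝ) (p β : Fin n → ℝ)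
    (κ μ g : ℝ) (hκ : 0 < κ) (hμ : 0 < μ) (hg : 0 ≤ g)
    (h1 : (1/2 : ℝ) • ((Matrix.diagonal p * A + Matrix.vecMulVec (β - g • p) p)
        + (Matrix.diagonal p * A + Matrix.vecMulVec (β - g • p) p)ᵀ) = 0)
    (h2 : Aᵀ *ᵥ p = -(μ - g * κ) • p - κ • β)
    (S L : (Fin n → ℝ) → ℝ)
    (hS : ∀ x : Fin n → ℝ, S x = p ⬝ᵥ (x - 1) + κ)
    (hL : ∀ x : Fin n → ℝ, L x = S x - κ - κ * Real.log (S x / κ))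
    (F : (Fin n → ℝ) → (Fin n → ℝ))
    (hF : ∀ x : Fin n → ℝ, F x = fun i => x i * (A *ᵥ (x - 1)) i) :
    ∀ x : Fin n → ℝ, (∀ i, 0 < x i) → 0 < p ⬝ᵥ (x - 1) + κ →
      fderiv ℝ L x (F x)
        = -μ * (p ⬝ᵥ (x - 1))^2 / (p ⬝ᵥ (x - 1) + κ)
          + (x - 1) ⬝ᵥ ((Matrix.diagonal p * A) *ᵥ (x - 1)) := by
  classical
  intro x hx hpos
  set v : Fin n → ℝ := x - 1 with hv
  set s : ℝ := p ⬝ᵥ v with hs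
  -- the linear map w ↦ p ⬝ᵥ w
  let φ : (Fin n → ℝ) →L[ℝ] ℝ := ∑ i, p i • (ContinuousLinearMap.proj i : (Fin n → ℝ) →L[ℝ] ℝ)
  have hφ : ∀ w, φ w = p ⬝ᵥ w := by
    intro w
    simp [φ, dotProduct, ContinuousLinearMap.sum_apply]
  have hSfun : S = fun y => φ y + (κ - p ⬝ᵥ 1) := by
    funext y
    rw [hS, hφ, dotProduct_sub]
    ring
  have hSder : HasFDerivAt S φ x := by
    rw [hSfun]; exact φ.hasFDerivAt.add_const _
  have hSx : S x = s + κ := by rw [hS]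
  have hSxpos : 0 < S x := by rw [hSx]; exact hpos
  have hκ' : (κ : ℝ) ≠ 0 := ne_of_gt hκ
  have hne : κ⁻¹ * S x ≠ 0 := by positivity
  have hLfun : L = fun y => S y - κ - κ * Real.log (κ⁻¹ * S y) := by
    funext y
    rw [hL, div_eq_inv_mul]
  have hLog : HasFDerivAt (fun y => Real.log (κ⁻¹ * S y))
      ((κ⁻¹ * S x)⁻¹ • (κ⁻¹ • φ)) x := (hSder.const_mul κ⁻¹).log hne
  have hLder : HasFDerivAt L (φ - κ • ((κ⁻¹ * S x)⁻¹ • (κ⁻¹ • φ))) x := by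
    rw [hLfun]
    exact (hSder.sub_const κ).sub (hLog.const_mul κ)
  have hfd : fderiv ℝ L x (F x)
      = p ⬝ᵥ F x - κ * ((κ⁻¹ * S x)⁻¹ * (κ⁻¹ * (p ⬝ᵥ F x))) := by
    rw [hLder.fderiv]
    simp [hφ]
  -- algebraic facts
  have hPF : p ⬝ᵥ F x = v ⬝ᵥ ((Matrix.diagonal p * A) *ᵥ v) + (Aᵀ *ᵥ p) ⬝ᵥ v := by
    have h3 : (Aᵀ *ᵥ p) ⬝ᵥ v = p ⬝ᵥ (A *ᵥ v) := by
      rw [Matrix.mulVec_transpose, Matrix.dotProduct_mulVec, dotProduct_comm]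
    have hdiag : ((Matrix.diagonal p * A) *ᵥ v) = fun i => p i * (A *ᵥ v) i := by
      funext i
      rw [← Matrix.mulVec_mulVec, Matrix.mulVec_diagonal]
    rw [h3, hF, hdiag]
    simp only [dotProduct, Pi.sub_apply, Pi.one_apply, hv, ← Finset.sum_add_distrib]
    refine Finset.sum_congr rfl fun i _ => ?_
    ring
  have hQ : v ⬝ᵥ ((Matrix.diagonal p * A) *ᵥ v) = -((β ⬝ᵥ v - g * s) * s) := by
    set M : Matrix (Fin n) (Fin n) ℝ :=
      Matrix.diagonal p * A + Matrix.vecMulVec (β - g • p) p with hM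
    have hMsym : M + Mᵀ = 0 := by
      have := congrArg (fun N => (2 : ℝ) • N) h1
      simpa [smul_smul] using this
    have e1 : v ⬝ᵥ (Mᵀ *ᵥ v) = v ⬝ᵥ (M *ᵥ v) := by
      rw [Matrix.mulVec_transpose, dotProduct_comm, ← Matrix.dotProduct_mulVec]
    have e2 : v ⬝ᵥ (M *ᵥ v) + v ⬝ᵥ (Mᵀ *ᵥ v) = 0 := by
      rw [← dotProduct_add, ← Matrix.add_mulVec, hMsym, Matrix.zero_mulVec,
        dotProduct_zero]
    have e3 : v ⬝ᵥ (M *ᵥ v) = 0 := by linarith [e1, e2]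
    have hvmv : ∀ a b u w : Fin n → ℝ,
        u ⬝ᵥ (Matrix.vecMulVec a b *ᵥ w) = (u ⬝ᵥ a) * (b ⬝ᵥ w) := by
      intro a b u w
      simp only [Matrix.vecMulVec_apply, Matrix.mulVec, dotProduct, Matrix.of_apply]
      rw [Finset.sum_mul_sum]
      refine Finset.sum_congr rfl fun i _ => ?_
      rw [Finset.mul_sum]
      refine Finset.sum_congr rfl fun j _ => ?_
      ring
    have e4 : v ⬝ᵥ (Matrix.vecMulVec (β - g • p) p *ᵥ v)
        = (β ⬝ᵥ v - g * s) * s := by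
      rw [hvmv]
      have : v ⬝ᵥ (β - g • p) = β ⬝ᵥ v - g * s := by
        rw [dotProduct_sub, dotProduct_smul, dotProduct_comm v β,
          dotProduct_comm v p, hs, smul_eq_mul]
      rw [this, hs]
    rw [hM, Matrix.add_mulVec, dotProduct_add] at e3
    linarith [e3, e4]
  have hC : (Aᵀ *ᵥ p) ⬝ᵥ v = -(μ - g * κ) * s - κ * (β ⬝ᵥ v) := by
    rw [h2]
    simp [sub_dotProduct, smul_dotProduct, hs]
  rw [hfd, hPF, hQ, hC, hSx]
  have hsκ : s + κ ≠ 0 := ne_of_gt hpos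
  field_simp
  ring
end

section
/- Let Z₁, Z₂ ∈ ℝ^{n×n} be symmetric matrices such that for every nonzero x ∈ ℝⁿ, min(xᵀZ₁x, xᵀZ₂x) < 0. Then there exist constants τ₁, τ₂ ≥ 0 such that τ₁Z₁ + τ₂Z₂ is negative definite. -/
/-! Write `Q t = (1 - t) q₁ + t q₂` for `t ∈ [0, 1]`. If no `Q t` is negative definite, the maximum
of each `Q t` on the unit sphere is `≥ 0`, so every maximizer `x` has `q₁ x ≥ 0` or `q₂ x ≥ 0`; at
`t = 0` some maximizer is of the first kind, at `t = 1` of the second. The maximizing pairs `(t, x)`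
form a compact set, so connectedness of `[0, 1]` yields one `t` with maximizers `x₁`, `x₂` of both
kinds. Both are eigenvectors of `Q t` for its top eigenvalue `μ ≥ 0`, hence so is every point of the
segment `[x₁, x₂]`, which avoids `0`. Since `q₂ x₁ < 0`, `q₁ x₂ < 0` and `min q₁ q₂ < 0` along the
segment, connectedness gives a point `z` there with `q₁ z < 0` and `q₂ z < 0`, so
`Q t z < 0 ≤ μ ‖z‖²`. -/

open Matrix Set Metric WithLp

theorem isClosed_setOf_isMaxOn {X Y : Type*} [TopologicalSpace X] [TopologicalSpace Y]
    {f : X → Y → ℝ} (hf : Continuous (Function.uncurry f)) (s : Set Y) :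
    IsClosed {p : X × Y | IsMaxOn (f p.1) s p.2} := by
  simp only [isMaxOn_iff, ofPred_forall]
  exact isClosed_biInter fun y _ ↦
    isClosed_le (hf.comp (continuous_fst.prodMk continuous_const)) hf

theorem IsPreconnected.exists_fiber_mem_both_of_isCompact {X Y : Type*} [TopologicalSpace X]
    [T2Space X] [TopologicalSpace Y] {s : Set X} (hs : IsPreconnected s) {K : Set (X × Y)}
    (hK : IsCompact K) {A B : Set Y} (hA : IsClosed A) (hB : IsClosed B)
    (hcover : ∀ x ∈ s, ∃ y ∈ A ∪ B, (x, y) ∈ K)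
    (hsA : ∃ x ∈ s, ∃ y ∈ A, (x, y) ∈ K) (hsB : ∃ x ∈ s, ∃ y ∈ B, (x, y) ∈ K) :
    ∃ x ∈ s, (∃ y ∈ A, (x, y) ∈ K) ∧ ∃ y ∈ B, (x, y) ∈ K := by
  have himage : ∀ C : Set Y, Prod.fst '' (K ∩ Prod.snd ⁻¹' C) = {x | ∃ y ∈ C, (x, y) ∈ K} := by
    intro C; ext x; simp [and_comm]
  have hclosed : ∀ C : Set Y, IsClosed C → IsClosed {x | ∃ y ∈ C, (x, y) ∈ K} := fun C hC ↦
    himage C ▸ ((hK.inter_right (hC.preimage continuous_snd)).image continuous_fst).isClosed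
  exact isPreconnected_closed_iff.1 hs _ _ (hclosed A hA) (hclosed B hB)
    (fun x hx ↦ let ⟨y, hy, hxy⟩ := hcover x hx; hy.imp (⟨y, ·, hxy⟩) (⟨y, ·, hxy⟩)) hsA hsB

theorem IsPreconnected.exists_neg_and_neg {X : Type*} [TopologicalSpace X] {s : Set X}
    (hs : IsPreconnected s) {f g : X → ℝ} (hf : Continuous f) (hg : Continuous g)
    (hcover : ∀ x ∈ s, min (f x) (g x) < 0)
    (hsf : ∃ x ∈ s, f x < 0) (hsg : ∃ x ∈ s, g x < 0) : ∃ x ∈ s, f x < 0 ∧ g x < 0 :=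
  hs {x | f x < 0} {x | g x < 0} (isOpen_lt hf continuous_const)
    (isOpen_lt hg continuous_const) (fun x hx ↦ min_lt_iff.1 (hcover x hx)) hsf hsg

namespace ContinuousLinearMap

open Module.End

variable {E : Type*} [NormedAddCommGroup E] [InnerProductSpace ℝ E]

theorem reApplyInnerSelf_smul_add_smul (S T : E →L[ℝ] E) (a b : ℝ) (x : E) :
    (a • S + b • T).reApplyInnerSelf x = a * S.reApplyInnerSelf x + b * T.reApplyInnerSelf x := by
  simp [reApplyInnerSelf_apply, inner_add_left, real_inner_smul_left]

theorem reApplyInnerSelf_nonneg_of_isMaxOn_sphere {T : E →L[ℝ] E} {x y : E}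
    (hx : IsMaxOn T.reApplyInnerSelf (sphere 0 1) x) (hy : y ≠ 0)
    (hTy : 0 ≤ T.reApplyInnerSelf y) : 0 ≤ T.reApplyInnerSelf x := by
  have hy' : ‖y‖⁻¹ • y ∈ sphere (0 : E) 1 := by simp [norm_smul, norm_ne_zero_iff.2 hy]
  calc 0 ≤ ‖‖y‖⁻¹‖ ^ 2 * T.reApplyInnerSelf y := by positivity
    _ = T.reApplyInnerSelf (‖y‖⁻¹ • y) := (T.reApplyInnerSelf_smul y).symm
    _ ≤ T.reApplyInnerSelf x := hx hy'

theorem mem_eigenspace_of_isMaxOn_sphere [CompleteSpace E] {T : E →L[ℝ] E}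
    (hT : (T : E →ₗ[ℝ] E).IsSymmetric) {x : E}
    (hx : x ∈ sphere (0 : E) 1) (hmax : IsMaxOn T.reApplyInnerSelf (sphere 0 1) x) :
    x ∈ eigenspace (T : E →ₗ[ℝ] E) (T.reApplyInnerSelf x) := by
  rw [mem_sphere_zero_iff_norm] at hx
  rw [← hx] at hmax
  simpa [mem_eigenspace_iff, rayleighQuotient, hx] using
    (isSelfAdjoint_iff_isSymmetric.2 hT).eq_smul_self_of_isLocalExtrOn_real (Or.inr hmax.localize)

theorem reApplyInnerSelf_nonneg_of_mem_eigenspace {T : E →L[ℝ] E} {μ : ℝ} (hμ : 0 ≤ μ) {x : E}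
    (hx : x ∈ eigenspace (T : E →ₗ[ℝ] E) μ) : 0 ≤ T.reApplyInnerSelf x := by
  rw [mem_eigenspace_iff] at hx
  have : T.reApplyInnerSelf x = μ * ‖x‖ ^ 2 := by
    simp [reApplyInnerSelf_apply, ← coe_coe, hx, real_inner_smul_left]
  rw [this]; positivity

theorem zero_notMem_segment_of_reApplyInnerSelf {T : E →L[ℝ] E} {x y : E} (hx : x ≠ 0)
    (hTx : 0 ≤ T.reApplyInnerSelf x) (hTy : T.reApplyInnerSelf y < 0) :
    (0 : E) ∉ segment ℝ x y := by
  rintro ⟨a, b, -, -, hab, hxy⟩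
  have hsq : a ^ 2 * T.reApplyInnerSelf x = b ^ 2 * T.reApplyInnerSelf y := by
    have h := congrArg T.reApplyInnerSelf (eq_neg_of_add_eq_zero_left hxy)
    rwa [← neg_smul, reApplyInnerSelf_smul, reApplyInnerSelf_smul, Real.norm_eq_abs,
      Real.norm_eq_abs, sq_abs, sq_abs, neg_sq] at h
  have hb : b = 0 := by
    have : b ^ 2 ≤ 0 := nonpos_of_mul_nonneg_left (hsq ▸ mul_nonneg (sq_nonneg a) hTx) hTy
    exact pow_eq_zero_iff two_ne_zero |>.1 (le_antisymm this (sq_nonneg b))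
  subst hb
  obtain rfl : a = 1 := by simpa using hab
  exact hx (by simpa using hxy)

theorem reApplyInnerSelf_smul_add_smul_neg {T₁ T₂ : E →L[ℝ] E} {t : ℝ} (ht : t ∈ Icc 0 1) {x : E}
    (h₁ : T₁.reApplyInnerSelf x < 0) (h₂ : T₂.reApplyInnerSelf x < 0) :
    ((1 - t) • T₁ + t • T₂).reApplyInnerSelf x < 0 := by
  rw [reApplyInnerSelf_smul_add_smul]
  exact convex_Iio (0 : ℝ) h₁ h₂ (sub_nonneg.2 ht.2) ht.1 (sub_add_cancel 1 t)

variable {T₁ T₂ : E →L[ℝ] E} (hT₁ : (T₁ : E →ₗ[ℝ] E).IsSymmetric)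
  (hT₂ : (T₂ : E →ₗ[ℝ] E).IsSymmetric)
  (h : ∀ x ≠ 0, min (T₁.reApplyInnerSelf x) (T₂.reApplyInnerSelf x) < 0)
include hT₁ hT₂ h

theorem reApplyInnerSelf_neg_of_isMaxOn_of_isMaxOn [CompleteSpace E] {t : ℝ} (ht : t ∈ Icc 0 1)
    {x₁ x₂ : E} (hx₁ : x₁ ∈ sphere (0 : E) 1) (hx₂ : x₂ ∈ sphere (0 : E) 1)
    (hmax₁ : IsMaxOn ((1 - t) • T₁ + t • T₂).reApplyInnerSelf (sphere 0 1) x₁)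
    (hmax₂ : IsMaxOn ((1 - t) • T₁ + t • T₂).reApplyInnerSelf (sphere 0 1) x₂)
    (h₁ : 0 ≤ T₁.reApplyInnerSelf x₁) (h₂ : 0 ≤ T₂.reApplyInnerSelf x₂) :
    ((1 - t) • T₁ + t • T₂).reApplyInnerSelf x₁ < 0 := by
  set T := (1 - t) • T₁ + t • T₂
  have hT : (T : E →ₗ[ℝ] E).IsSymmetric := by
    simpa [T] using (hT₁.smul (conj_trivial (1 - t))).add (hT₂.smul (conj_trivial t))
  have hx₁₀ : x₁ ≠ 0 := ne_zero_of_mem_unit_sphere ⟨x₁, hx₁⟩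
  have hx₂₀ : x₂ ≠ 0 := ne_zero_of_mem_unit_sphere ⟨x₂, hx₂⟩
  have hq₁ : T₂.reApplyInnerSelf x₁ < 0 := (min_lt_iff.1 (h x₁ hx₁₀)).resolve_left h₁.not_gt
  have hq₂ : T₁.reApplyInnerSelf x₂ < 0 := (min_lt_iff.1 (h x₂ hx₂₀)).resolve_right h₂.not_gt
  by_contra! hμ
  have hseg : segment ℝ x₁ x₂ ⊆ eigenspace (T : E →ₗ[ℝ] E) (T.reApplyInnerSelf x₁) := by
    have hE₂ := mem_eigenspace_of_isMaxOn_sphere hT hx₂ hmax₂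
    have heq : T.reApplyInnerSelf x₂ = T.reApplyInnerSelf x₁ := le_antisymm (hmax₁ hx₂) (hmax₂ hx₁)
    rw [heq] at hE₂
    exact (Submodule.convex _).segment_subset (mem_eigenspace_of_isMaxOn_sphere hT hx₁ hmax₁) hE₂
  obtain ⟨z, hz, hz₁, hz₂⟩ := (convex_segment x₁ x₂).isPreconnected.exists_neg_and_neg
    T₁.reApplyInnerSelf_continuous T₂.reApplyInnerSelf_continuous
    (fun z hz ↦ h z (ne_of_mem_of_not_mem hz (zero_notMem_segment_of_reApplyInnerSelf hx₁₀ h₁ hq₂)))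
    ⟨x₂, right_mem_segment ℝ x₁ x₂, hq₂⟩ ⟨x₁, left_mem_segment ℝ x₁ x₂, hq₁⟩
  exact (reApplyInnerSelf_smul_add_smul_neg ht hz₁ hz₂).not_ge
    (reApplyInnerSelf_nonneg_of_mem_eigenspace hμ (hseg hz))

theorem exists_reApplyInnerSelf_smul_add_smul_neg [FiniteDimensional ℝ E] :
    ∃ t ∈ Icc (0 : ℝ) 1, ∀ x ≠ 0, ((1 - t) • T₁ + t • T₂).reApplyInnerSelf x < 0 := by
  by_contra! hbad
  obtain ⟨x₀, hx₀, -⟩ := hbad 0 ⟨le_rfl, zero_le_one⟩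
  have : Nontrivial E := nontrivial_of_ne x₀ 0 hx₀
  have hQ : Continuous fun p : ℝ × E ↦ ((1 - p.1) • T₁ + p.1 • T₂).reApplyInnerSelf p.2 := by
    simp only [reApplyInnerSelf_smul_add_smul]
    have := T₁.reApplyInnerSelf_continuous
    have := T₂.reApplyInnerSelf_continuous
    fun_prop
  set K := Icc 0 1 ×ˢ sphere 0 1 ∩
    {p : ℝ × E | IsMaxOn ((1 - p.1) • T₁ + p.1 • T₂).reApplyInnerSelf (sphere 0 1) p.2}
  have hK : IsCompact K := (isCompact_Icc.prod (isCompact_sphere 0 1)).inter_right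
    (isClosed_setOf_isMaxOn (f := fun t ↦ ((1 - t) • T₁ + t • T₂).reApplyInnerSelf) hQ _)
  have hmax : ∀ t ∈ Icc (0 : ℝ) 1,
      ∃ x, (t, x) ∈ K ∧ 0 ≤ ((1 - t) • T₁ + t • T₂).reApplyInnerSelf x := by
    intro t ht
    obtain ⟨x, hx, hxmax⟩ := (isCompact_sphere (0 : E) 1).exists_isMaxOn
      (NormedSpace.sphere_nonempty.2 zero_le_one)
      (hQ.comp (continuous_const.prodMk continuous_id)).continuousOn
    obtain ⟨y, hy, hQy⟩ := hbad t ht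
    exact ⟨x, ⟨⟨ht, hx⟩, hxmax⟩, reApplyInnerSelf_nonneg_of_isMaxOn_sphere hxmax hy hQy⟩
  have hcover : ∀ t ∈ Icc (0 : ℝ) 1,
      ∃ x ∈ {x | 0 ≤ T₁.reApplyInnerSelf x} ∪ {x | 0 ≤ T₂.reApplyInnerSelf x}, (t, x) ∈ K := by
    intro t ht
    obtain ⟨x, hxK, hx⟩ := hmax t ht
    refine ⟨x, ?_, hxK⟩
    by_contra hneg
    simp only [mem_union, mem_ofPred_eq, not_or, not_le] at hneg
    exact hx.not_gt (reApplyInnerSelf_smul_add_smul_neg ht hneg.1 hneg.2)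
  obtain ⟨y₀, hy₀K, hy₀⟩ := hmax 0 (left_mem_Icc.2 zero_le_one)
  obtain ⟨y₁, hy₁K, hy₁⟩ := hmax 1 (right_mem_Icc.2 zero_le_one)
  obtain ⟨t, ht, ⟨x₁, hx₁, hK₁⟩, ⟨x₂, hx₂, hK₂⟩⟩ :=
    isPreconnected_Icc.exists_fiber_mem_both_of_isCompact hK
      (isClosed_le continuous_const T₁.reApplyInnerSelf_continuous)
      (isClosed_le continuous_const T₂.reApplyInnerSelf_continuous) hcover
      ⟨0, left_mem_Icc.2 zero_le_one, y₀, by simpa using hy₀, hy₀K⟩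
      ⟨1, right_mem_Icc.2 zero_le_one, y₁, by simpa using hy₁, hy₁K⟩
  obtain ⟨y, hy, hQy⟩ := hbad t ht
  exact (reApplyInnerSelf_nonneg_of_isMaxOn_sphere hK₁.2 hy hQy).not_gt
    (reApplyInnerSelf_neg_of_isMaxOn_of_isMaxOn hT₁ hT₂ h ht hK₁.1.2 hK₂.1.2 hK₁.2 hK₂.2 hx₁ hx₂)

end ContinuousLinearMap

namespace Matrix

variable {ι : Type*} [Fintype ι] [DecidableEq ι]

theorem reApplyInnerSelf_toEuclideanCLM (Z : Matrix ι ι ℝ) (x : EuclideanSpace ℝ ι) :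
    (toEuclideanCLM (𝕜 := ℝ) Z).reApplyInnerSelf x = ofLp x ⬝ᵥ Z *ᵥ ofLp x := by
  rw [ContinuousLinearMap.reApplyInnerSelf_apply, RCLike.re_to_real, real_inner_comm,
    inner_toEuclideanCLM]

theorem IsSymm.isSymmetric_toEuclideanCLM {Z : Matrix ι ι ℝ} (hZ : Z.IsSymm) :
    (toEuclideanCLM (𝕜 := ℝ) Z : EuclideanSpace ℝ ι →ₗ[ℝ] EuclideanSpace ℝ ι).IsSymmetric :=
  isSymmetric_toEuclideanLin_iff.2 (isHermitian_iff_isSymm.2 hZ)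

end Matrix

/-- S-procedure: If symmetric Z₁, Z₂ satisfy
min(xᵀZ₁x, xᵀZ₂x) < 0 for every nonzero x, then some nonnegative combination
τ₁Z₁ + τ₂Z₂ is negative definite. -/
theorem stmt5 (n : ℕ) (Z₁ Z₂ : Matrix (Fin n) (Fin n) ℝ)
    (hZ₁ : Z₁.IsSymm) (hZ₂ : Z₂.IsSymm)
    (h : ∀ x : Fin n → ℝ, x ≠ 0 → min (x ⬝ᵥ (Z₁ *ᵥ x)) (x ⬝ᵥ (Z₂ *ᵥ x)) < 0) :
    ∃ τ₁ τ₂ : ℝ, 0 ≤ τ₁ ∧ 0 ≤ τ₂ ∧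
      ∀ x : Fin n → ℝ, x ≠ 0 → x ⬝ᵥ ((τ₁ • Z₁ + τ₂ • Z₂) *ᵥ x) < 0 := by
  obtain ⟨t, ht, hneg⟩ := ContinuousLinearMap.exists_reApplyInnerSelf_smul_add_smul_neg
    hZ₁.isSymmetric_toEuclideanCLM hZ₂.isSymmetric_toEuclideanCLM fun x hx ↦ by
      simpa only [reApplyInnerSelf_toEuclideanCLM] using h (ofLp x) (by simpa using hx)
  refine ⟨1 - t, t, sub_nonneg.2 ht.2, ht.1, fun x hx ↦ ?_⟩
  simpa [← map_smul, ← map_add, reApplyInnerSelf_toEuclideanCLM] using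
    hneg (toLp 2 x) (by simpa using hx)
end

section
/- Suppose α ∈ ℝⁿ with all entries nonzero, λ < 0, αᵀA = λαᵀ, and yᵀdiag(α)Ay < 0 for all nonzero y ∈ ℝⁿ with αᵀy = 0. Then there exists b ∈ ℝ such that the matrix ((diag(α) + b α αᵀ)A)ˢ is negative definite. -/
open Matrix

lemma quad_cont {n : ℕ} (M : Matrix (Fin n) (Fin n) ℝ) :
    Continuous fun x : Fin n → ℝ => x ⬝ᵥ (M *ᵥ x) := by
  simp only [dotProduct, mulVec]
  fun_prop

lemma quad_smul {n : ℕ} (M : Matrix (Fin n) (Fin n) ℝ) (c : ℝ) (x : Fin n → ℝ) :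
    (c • x) ⬝ᵥ (M *ᵥ (c • x)) = c ^ 2 * (x ⬝ᵥ (M *ᵥ x)) := by
  rw [mulVec_smul, smul_dotProduct, dotProduct_smul, smul_eq_mul, smul_eq_mul]
  ring

lemma vecMulVec_mulVec' {n : ℕ} (a : Fin n → ℝ) (w : Fin n → ℝ) :
    vecMulVec a a *ᵥ w = (a ⬝ᵥ w) • a := by
  funext i
  simp only [mulVec, vecMulVec_apply, dotProduct, Pi.smul_apply, smul_eq_mul,
    Finset.sum_mul, Finset.mul_sum]
  exact Finset.sum_congr rfl fun j _ => by ring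

lemma sym_quad {n : ℕ} (B : Matrix (Fin n) (Fin n) ℝ) (x : Fin n → ℝ) :
    x ⬝ᵥ (((1/2 : ℝ) • (B + Bᵀ)) *ᵥ x) = x ⬝ᵥ (B *ᵥ x) := by
  rw [smul_mulVec, dotProduct_smul, add_mulVec, dotProduct_add]
  have h : x ⬝ᵥ (Bᵀ *ᵥ x) = x ⬝ᵥ (B *ᵥ x) := by
    rw [dotProduct_mulVec, vecMul_transpose, dotProduct_comm]
  rw [h, smul_eq_mul]; ring

/-- If α has all nonzero entries, λ < 0, αᵀA = λαᵀ, and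
yᵀdiag(α)Ay < 0 for all nonzero y with αᵀy = 0, then there exists b ∈ ℝ such that
((diag(α) + b α αᵀ)A)ˢ is negative definite. -/
theorem stmt6 (n : ℕ) (A : Matrix (Fin n) (Fin n) ℝ) (α : Fin n → ℝ) (lam : ℝ)
    (hα : ∀ i, α i ≠ 0) (hlam : lam < 0)
    (heig : α ᵥ* A = lam • α)
    (hneg : ∀ y : Fin n → ℝ, y ≠ 0 → α ⬝ᵥ y = 0 →
      y ⬝ᵥ ((Matrix.diagonal α * A) *ᵥ y) < 0) :
    ∃ b : ℝ, ∀ x : Fin n → ℝ, x ≠ 0 →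
      x ⬝ᵥ (((1/2 : ℝ) • (((Matrix.diagonal α + b • Matrix.vecMulVec α α) * A)
        + ((Matrix.diagonal α + b • Matrix.vecMulVec α α) * A)ᵀ)) *ᵥ x) < 0 := by
  set f : (Fin n → ℝ) → ℝ := fun x => x ⬝ᵥ ((Matrix.diagonal α * A) *ᵥ x) with hfdef
  -- key identity for the quadratic form
  have key : ∀ (b : ℝ) (x : Fin n → ℝ),
      x ⬝ᵥ (((1/2 : ℝ) • (((Matrix.diagonal α + b • Matrix.vecMulVec α α) * A)
        + ((Matrix.diagonal α + b • Matrix.vecMulVec α α) * A)ᵀ)) *ᵥ x)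
      = f x + b * lam * (α ⬝ᵥ x) ^ 2 := by
    intro b x
    rw [sym_quad, add_mul, Matrix.smul_mul, add_mulVec, dotProduct_add,
      smul_mulVec, dotProduct_smul]
    have h2 : x ⬝ᵥ ((Matrix.vecMulVec α α * A) *ᵥ x) = lam * (α ⬝ᵥ x) ^ 2 := by
      rw [← mulVec_mulVec, vecMulVec_mulVec', dotProduct_smul]
      have : α ⬝ᵥ (A *ᵥ x) = lam * (α ⬝ᵥ x) := by
        rw [dotProduct_mulVec, heig, smul_dotProduct, smul_eq_mul]
      rw [this, dotProduct_comm, smul_eq_mul]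
      ring
    rw [h2, smul_eq_mul]
    ring
  -- reduce to the unit sphere
  suffices hS : ∃ b : ℝ, ∀ u : Fin n → ℝ, ‖u‖ = 1 → f u + b * lam * (α ⬝ᵥ u) ^ 2 < 0 by
    obtain ⟨b, hb⟩ := hS
    refine ⟨b, fun x hx => ?_⟩
    rw [key]
    have hxn : (0 : ℝ) < ‖x‖ := norm_pos_iff.mpr hx
    have hun : ‖(‖x‖⁻¹ • x)‖ = 1 := by
      rw [norm_smul, norm_inv, norm_norm, inv_mul_cancel₀ (ne_of_gt hxn)]
    have hval : f (‖x‖⁻¹ • x) + b * lam * (α ⬝ᵥ (‖x‖⁻¹ • x)) ^ 2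
        = (‖x‖⁻¹) ^ 2 * (f x + b * lam * (α ⬝ᵥ x) ^ 2) := by
      rw [hfdef]
      simp only [quad_smul, dotProduct_smul, smul_eq_mul]
      ring
    have hlt := hb _ hun
    have hpos : (0 : ℝ) < (‖x‖⁻¹) ^ 2 := by positivity
    nlinarith [hlt, hval, hpos]
  -- work on the compact sphere
  have hfc : Continuous f := quad_cont _
  have hgc : Continuous fun x : Fin n → ℝ => (α ⬝ᵥ x) ^ 2 := by
    have : Continuous fun x : Fin n → ℝ => α ⬝ᵥ x := by
      simp only [dotProduct]; fun_prop
    exact this.pow 2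
  set S : Set (Fin n → ℝ) := Metric.sphere 0 1 with hSdef
  have hScompact : IsCompact S := isCompact_sphere 0 1
  set K : Set (Fin n → ℝ) := S ∩ {x | 0 ≤ f x} with hKdef
  have hKcompact : IsCompact K :=
    hScompact.inter_right (isClosed_le continuous_const hfc)
  have hSmem : ∀ u ∈ S, ‖u‖ = 1 := by
    intro u hu
    simpa [hSdef, Metric.mem_sphere, dist_eq_norm] using hu
  rcases K.eq_empty_or_nonempty with hKe | hKne
  · -- K empty : b = 0 works
    refine ⟨0, fun u hu => ?_⟩
    have huS : u ∈ S := by simp [hSdef, Metric.mem_sphere, dist_eq_norm, hu]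
    have : u ∉ K := by rw [hKe]; exact Set.notMem_empty u
    have hfu : f u < 0 := by
      by_contra h
      push_neg at h
      exact this ⟨huS, h⟩
    simpa using hfu
  · -- K nonempty : compactness argument
    obtain ⟨xM, hxMK, hxMmax⟩ := hKcompact.exists_isMaxOn hKne hfc.continuousOn
    obtain ⟨xm, hxmK, hxmmin⟩ := hKcompact.exists_isMinOn hKne hgc.continuousOn
    set M : ℝ := f xM with hMdef
    set m : ℝ := (α ⬝ᵥ xm) ^ 2 with hmdef
    have hM0 : 0 ≤ M := hxMK.2
    have hm0 : 0 < m := by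
      have hxmne : xm ≠ 0 := by
        intro h
        have := hSmem xm hxmK.1
        rw [h] at this; simp at this
      have : α ⬝ᵥ xm ≠ 0 := by
        intro h
        exact absurd (hneg xm hxmne h) (not_lt.mpr hxmK.2)
      positivity
    refine ⟨(M + 1) / (-lam * m), fun u hu => ?_⟩
    have huS : u ∈ S := by simp [hSdef, Metric.mem_sphere, dist_eq_norm, hu]
    have hbpos : 0 < (M + 1) / (-lam * m) := by
      apply div_pos (by linarith) (by nlinarith)
    have hblm : (M + 1) / (-lam * m) * lam * m = -(M + 1) := by
      have hne : (-lam * m) ≠ 0 := ne_of_gt (by nlinarith)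
      rw [div_mul_eq_mul_div, div_mul_eq_mul_div, div_eq_iff hne]
      ring
    by_cases hfu : 0 ≤ f u
    · have huK : u ∈ K := ⟨huS, hfu⟩
      have h1 : f u ≤ M := hxMmax huK
      have h2 : m ≤ (α ⬝ᵥ u) ^ 2 := hxmmin huK
      have h3 : (M + 1) / (-lam * m) * lam * (α ⬝ᵥ u) ^ 2
          ≤ (M + 1) / (-lam * m) * lam * m := by
        apply mul_le_mul_of_nonpos_left h2
        exact le_of_lt (mul_neg_of_pos_of_neg hbpos hlam)
      linarith [hblm ▸ h3]
    · push_neg at hfu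
      have h4 : (M + 1) / (-lam * m) * lam * (α ⬝ᵥ u) ^ 2 ≤ 0 := by
        apply mul_nonpos_of_nonpos_of_nonneg
        · exact le_of_lt (mul_neg_of_pos_of_neg hbpos hlam)
        · positivity
      linarith
end

section
/- For A = -[[5, 10, 2], [4, 7, 11], [10, 2, 8]], there is no h ∈ int(ℝ₊³) such that (diag(h)A)ˢ is negative definite. -/
open Matrix

/-- For A = -[[5,10,2],[4,7,11],[10,2,8]], there is no h ∈ int(ℝ₊³)
such that (diag(h)A)ˢ is negative definite. -/
theorem stmt9
    (A : Matrix (Fin 3) (Fin 3) ℝ)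
    (hA : A = -!![5, 10, 2; 4, 7, 11; 10, 2, 8]) :
    ¬ ∃ h : Fin 3 → ℝ, (∀ i, 0 < h i) ∧
      ∀ x : Fin 3 → ℝ, x ≠ 0 →
        x ⬝ᵥ (((1/2 : ℝ) • (Matrix.diagonal h * A + (Matrix.diagonal h * A)ᵀ)) *ᵥ x)
          < 0 := by
  rintro ⟨h, hpos, hneg⟩
  have hx : (![2, -1, 0] : Fin 3 → ℝ) ≠ 0 := by
    intro hc
    have := congrFun hc 0
    norm_num at this
  have := hneg ![2, -1, 0] hx
  subst hA
  simp only [dotProduct, mulVec, Matrix.diagonal_mul, Matrix.smul_apply, Matrix.add_apply,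
    Matrix.transpose_apply, Matrix.neg_apply, Fin.sum_univ_three] at this
  norm_num [Matrix.cons_val_zero, Matrix.cons_val_one, Matrix.head_cons, Matrix.cons_val_two, Matrix.tail_cons] at this
  · linarith [hpos 1]
end

section
/- Let k ∈ ℝ₊ⁿ, b < 0 with b·kᵀ1ₙ > -1. Then for all x ∈ int(ℝ₊ⁿ): (kᵀ(x - 1ₙ) - 1/b)·exp(b Σᵢ kᵢ ln(xᵢ)) ≥ -((1 + b kᵀ1ₙ)/b)·exp(b Σᵢ kᵢ ln(xᵢ)) > 0. -/
open Matrix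

/-- For k ∈ ℝ₊ⁿ, b < 0 with b kᵀ1ₙ > -1, for all x in the positive
orthant: (kᵀ(x-1ₙ) - 1/b)·exp(b Σᵢ kᵢ ln xᵢ) ≥ -((1 + b kᵀ1ₙ)/b)·exp(b Σᵢ kᵢ ln xᵢ) > 0. -/
theorem stmt13 (n : ℕ) (k : Fin n → ℝ) (hk : ∀ i, 0 ≤ k i) (b : ℝ) (hb : b < 0)
    (hbk : -1 < b * (k ⬝ᵥ (1 : Fin n → ℝ))) :
    ∀ x : Fin n → ℝ, (∀ i, 0 < x i) →
      (k ⬝ᵥ (x - 1) - 1/b) * Real.exp (b * ∑ i, k i * Real.log (x i))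
        ≥ -((1 + b * (k ⬝ᵥ (1 : Fin n → ℝ))) / b)
            * Real.exp (b * ∑ i, k i * Real.log (x i)) ∧
      0 < -((1 + b * (k ⬝ᵥ (1 : Fin n → ℝ))) / b)
            * Real.exp (b * ∑ i, k i * Real.log (x i)) := by
  intro x hx
  have hexp : 0 < Real.exp (b * ∑ i, k i * Real.log (x i)) := Real.exp_pos _
  have hcoef : 0 < -((1 + b * (k ⬝ᵥ (1 : Fin n → ℝ))) / b) := by
    have h1 : 0 < 1 + b * (k ⬝ᵥ (1 : Fin n → ℝ)) := by linarith
    have := div_neg_of_pos_of_neg h1 hb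
    linarith
  refine ⟨?_, mul_pos hcoef hexp⟩
  apply mul_le_mul_of_nonneg_right _ hexp.le
  have hkx : 0 ≤ k ⬝ᵥ x :=
    Finset.sum_nonneg fun i _ => mul_nonneg (hk i) (hx i).le
  have hsub : k ⬝ᵥ (x - 1) = k ⬝ᵥ x - k ⬝ᵥ (1 : Fin n → ℝ) := by
    simp [dotProduct, Finset.sum_sub_distrib, mul_sub]
  rw [hsub]
  have : -((1 + b * (k ⬝ᵥ (1 : Fin n → ℝ))) / b) = -(1/b) - k ⬝ᵥ (1 : Fin n → ℝ) := by
    have hb0 : b ≠ 0 := hb.ne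
    rw [add_div, mul_div_cancel_left₀ _ hb0]
    ring
  rw [this]
  linarith
end

section
/- Let k ∈ ℝ₊ⁿ, b < 0 with 1 + b·kᵀ1ₙ > 0, and let W(x) = (kᵀ(x - 1ₙ) - 1/b)·exp(b Σᵢ kᵢ ln xᵢ) + 1/b for x ∈ int(ℝ₊ⁿ). Then for any x ∈ int(ℝ₊ⁿ), (1/b)·ln((1 - b·W(x))/(1 + b kᵀ1ₙ)) ≤ Σᵢ kᵢ ln(xᵢ). -/
open Matrix

/-- For k ∈ ℝ₊ⁿ, b < 0 with 1 + b kᵀ1ₙ > 0 and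
W(x) = (kᵀ(x-1ₙ) - 1/b)·exp(b Σᵢ kᵢ ln xᵢ) + 1/b, for all x in the positive orthant:
(1/b)·ln((1 - b W(x))/(1 + b kᵀ1ₙ)) ≤ Σᵢ kᵢ ln xᵢ. -/
theorem stmt14 (n : ℕ) (k : Fin n → ℝ) (hk : ∀ i, 0 ≤ k i) (b : ℝ) (hb : b < 0)
    (hbk : 0 < 1 + b * (k ⬝ᵥ (1 : Fin n → ℝ)))
    (W : (Fin n → ℝ) → ℝ)
    (hW : ∀ x : Fin n → ℝ,
      W x = (k ⬝ᵥ (x - 1) - 1/b) * Real.exp (b * ∑ i, k i * Real.log (x i)) + 1/b) :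
    ∀ x : Fin n → ℝ, (∀ i, 0 < x i) →
      (1/b) * Real.log ((1 - b * W x) / (1 + b * (k ⬝ᵥ (1 : Fin n → ℝ))))
        ≤ ∑ i, k i * Real.log (x i) := by
  intro x hx
  have hb' : b ≠ 0 := ne_of_lt hb
  set S := ∑ i, k i * Real.log (x i) with hS
  set C := k ⬝ᵥ (1 : Fin n → ℝ) with hC
  set A := k ⬝ᵥ x with hA
  have hA0 : 0 ≤ A := by
    rw [hA, dotProduct]
    exact Finset.sum_nonneg fun i _ => mul_nonneg (hk i) (hx i).le
  have hsub : k ⬝ᵥ (x - 1) = A - C := by rw [hA, hC, dotProduct_sub]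
  have hE : (0:ℝ) < Real.exp (b * S) := Real.exp_pos _
  have key : 1 - b * W x = Real.exp (b * S) * (1 + b * C - b * A) := by
    rw [hW x, hsub, ← hS]
    field_simp
    ring
  have hT : 0 < 1 + b * C - b * A := by nlinarith
  have hTC : 1 + b * C ≤ 1 + b * C - b * A := by nlinarith
  have hlog : Real.log (1 + b * C) ≤ Real.log (1 + b * C - b * A) :=
    Real.log_le_log hbk hTC
  rw [key, mul_div_assoc, Real.log_mul (ne_of_gt hE) (ne_of_gt (by positivity)),
    Real.log_div (ne_of_gt hT) (ne_of_gt hbk), Real.log_exp]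
  have hd : 0 ≤ Real.log (1 + b * C - b * A) - Real.log (1 + b * C) := by linarith
  have h1b : (1:ℝ)/b < 0 := by
    exact div_neg_of_pos_of_neg one_pos hb
  have heq : 1/b * (b * S + (Real.log (1 + b * C - b * A) - Real.log (1 + b * C)))
      = S + (Real.log (1 + b * C - b * A) - Real.log (1 + b * C)) * (1/b) := by
    field_simp
  rw [heq]
  nlinarith [mul_nonpos_of_nonneg_of_nonpos hd h1b.le]
end

section
/- Consider the 3-dimensional system ẋ₁ = -(x₁/δ)·y₃*(x₃ - 1), ẋ₂ = 0, ẋ₃ = (x₃/δ)·y₁*(x₁ - 1) with δ, y₁*, y₂*, y₃* > 0, restricted to the set C = {x ∈ ℝ₊³ : y₁*(x₁-1) + y₂*(x₂-1) + y₃*(x₃-1) = 0}. Any complete solution that remains in C satisfies x₁(t) ≡ x₃(t) and x₁(t)(x₁(t) - 1) ≡ 0; hence the largest invariant subset of C in ℝ₊³ consists of the point 1₃ and the point (0, (y₁* + y₂* + y₃*)/y₂*, 0)ᵀ. -/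
/-- For the system ẋ₁ = -(x₁/δ)y₃*(x₃-1), ẋ₂ = 0, ẋ₃ = (x₃/δ)y₁*(x₁-1)
with δ, y₁*, y₂*, y₃* > 0, restricted to
C = {x ∈ ℝ₊³ : y₁*(x₁-1) + y₂*(x₂-1) + y₃*(x₃-1) = 0}: every complete solution
remaining in C satisfies x₁ ≡ x₃ and x₁(x₁-1) ≡ 0, hence equals one of the two
points 1₃ and (0, (y₁*+y₂*+y₃*)/y₂*, 0); conversely both points lie in C and are
equilibria (so the largest invariant subset of C is exactly these two points). -/
theorem stmt15 (δ y₁ y₂ y₃ : ℝ) (hδ : 0 < δ) (hy₁ : 0 < y₁) (hy₂ : 0 < y₂)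
    (hy₃ : 0 < y₃) :
    (∀ x₁ x₂ x₃ : ℝ → ℝ,
      (∀ t : ℝ, HasDerivAt x₁ (-(x₁ t / δ) * y₃ * (x₃ t - 1)) t) →
      (∀ t : ℝ, HasDerivAt x₂ 0 t) →
      (∀ t : ℝ, HasDerivAt x₃ (x₃ t / δ * y₁ * (x₁ t - 1)) t) →
      (∀ t : ℝ, 0 ≤ x₁ t ∧ 0 ≤ x₂ t ∧ 0 ≤ x₃ t ∧
        y₁ * (x₁ t - 1) + y₂ * (x₂ t - 1) + y₃ * (x₃ t - 1) = 0) →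
      (∀ t : ℝ, x₁ t = x₃ t ∧ x₁ t * (x₁ t - 1) = 0) ∧
      (∀ t : ℝ, (x₁ t = 1 ∧ x₂ t = 1 ∧ x₃ t = 1) ∨
        (x₁ t = 0 ∧ x₂ t = (y₁ + y₂ + y₃) / y₂ ∧ x₃ t = 0))) ∧
    -- both points lie in C and are equilibria of the system:
    ((0 : ℝ) ≤ 1 ∧ y₁ * (1 - 1) + y₂ * (1 - 1) + y₃ * (1 - 1) = 0 ∧
      -(1 / δ) * y₃ * (1 - 1) = 0 ∧ (1 : ℝ) / δ * y₁ * (1 - 1) = 0) ∧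
    (0 ≤ (y₁ + y₂ + y₃) / y₂ ∧
      y₁ * (0 - 1) + y₂ * ((y₁ + y₂ + y₃) / y₂ - 1) + y₃ * (0 - 1) = 0 ∧
      -(0 / δ) * y₃ * (0 - 1) = 0 ∧ (0 : ℝ) / δ * y₁ * (0 - 1) = 0) := by
  refine ⟨?_, ?_, ?_⟩
  · intro x₁ x₂ x₃ hx1 hx2 hx3 hC
    have heq : ∀ t, x₁ t = x₃ t := by
      intro t
      have hg : HasDerivAt (fun t => y₁ * (x₁ t - 1) + y₂ * (x₂ t - 1) + y₃ * (x₃ t - 1))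
          (y₁ * (-(x₁ t / δ) * y₃ * (x₃ t - 1)) + y₂ * 0 + y₃ * (x₃ t / δ * y₁ * (x₁ t - 1))) t := by
        exact ((((hx1 t).sub_const 1).const_mul y₁).add
          (((hx2 t).sub_const 1).const_mul y₂)).add (((hx3 t).sub_const 1).const_mul y₃)
      have hg0 : HasDerivAt (fun t => y₁ * (x₁ t - 1) + y₂ * (x₂ t - 1) + y₃ * (x₃ t - 1))
          (0 : ℝ) t := by
        have : (fun t => y₁ * (x₁ t - 1) + y₂ * (x₂ t - 1) + y₃ * (x₃ t - 1))
            = fun _ => (0 : ℝ) := funext fun s => (hC s).2.2.2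
        rw [this]; exact hasDerivAt_const t 0
      have h0 := hg.unique hg0
      have hd : y₁ * y₃ / δ * (x₁ t - x₃ t) = 0 := by
        field_simp at h0 ⊢; nlinarith [h0]
      have hne : y₁ * y₃ / δ ≠ 0 := by positivity
      have := mul_eq_zero.mp hd
      rcases this with h | h
      · exact absurd h hne
      · linarith
    refine ⟨fun t => ⟨heq t, ?_⟩, ?_⟩
    · have hx3' : HasDerivAt x₃ (-(x₁ t / δ) * y₃ * (x₁ t - 1)) t := by
        have hfe : x₃ = x₁ := funext fun s => (heq s).symm
        rw [hfe]; simpa [heq t] using hx1 t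
      have hu := (hx3 t).unique hx3'
      have h1 := heq t
      rw [← h1] at hu
      have hδ' : δ ≠ 0 := ne_of_gt hδ
      field_simp at hu
      have key : x₁ t * (x₁ t - 1) * (y₁ + y₃) = 0 := by nlinarith [hu]
      rcases mul_eq_zero.mp key with h | h
      · exact h
      · nlinarith
    · intro t
      have h1 := heq t
      have hc := (hC t).2.2.2
      have hx1sq : x₁ t * (x₁ t - 1) = 0 := by
        have hx3' : HasDerivAt x₃ (-(x₁ t / δ) * y₃ * (x₁ t - 1)) t := by
          have hfe : x₃ = x₁ := funext fun s => (heq s).symm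
          rw [hfe]; simpa [heq t] using hx1 t
        have hu := (hx3 t).unique hx3'
        rw [← h1] at hu
        have hδ' : δ ≠ 0 := ne_of_gt hδ
        field_simp at hu
        have key : x₁ t * (x₁ t - 1) * (y₁ + y₃) = 0 := by nlinarith [hu]
        rcases mul_eq_zero.mp key with h | h
        · exact h
        · nlinarith
      rcases mul_eq_zero.mp hx1sq with h | h
      · right
        refine ⟨h, ?_, by rw [← h1]; exact h⟩
        rw [h, ← h1] at hc
        field_simp
        nlinarith [hc]
      · left
        have h1' : x₁ t = 1 := by linarith
        refine ⟨h1', ?_, by rw [← h1]; exact h1'⟩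
        rw [h1', ← h1, h1'] at hc
        have : y₂ * (x₂ t - 1) = 0 := by linarith
        rcases mul_eq_zero.mp this with h' | h'
        · exact absurd h' (ne_of_gt hy₂)
        · linarith
  · norm_num
  · refine ⟨by positivity, ?_, by norm_num, by norm_num⟩
    field_simp
    ring
end

section
/- Suppose β ∈ ℝ₊ⁿ, g ≥ 0, κ, μ > 0 with μ ≥ βᵀ1ₙ - gκ, and S : [0,∞) → ℝ is C¹ along a trajectory x(t) ∈ int(ℝ₊ⁿ) with Ṡ = -S βᵀx + gS² - (μ - βᵀ1ₙ + gκ)S + κμ. If ε > 0 satisfies ρ := κμ - (sup_{t≥0} βᵀx(t) + μ - βᵀ1ₙ + gκ)·ε > 0 and x(t) is bounded, then there exists t₀ ≥ 0 such that S(t) ≥ ε for all t ≥ t₀. -/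
open Matrix

/-- Suppose β ∈ ℝ₊ⁿ, g ≥ 0, κ, μ > 0 with μ ≥ βᵀ1ₙ - gκ and S satisfies
Ṡ = -S βᵀx + gS² - (μ - βᵀ1ₙ + gκ)S + κμ along a bounded trajectory x(t) in the
positive orthant. If ε > 0 satisfies ρ := κμ - (sup_{t≥0} βᵀx(t) + μ - βᵀ1ₙ + gκ)ε > 0,
then S(t) ≥ ε for all sufficiently large t. -/
theorem stmt17 (n : ℕ) (β : Fin n → ℝ) (hβ : ∀ i, 0 ≤ β i) (g κ μ : ℝ)
    (hg : 0 ≤ g) (hκ : 0 < κ) (hμ : 0 < μ) (hμβ : β ⬝ᵥ (1 : Fin n → ℝ) - g * κ ≤ μ)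
    (x : ℝ → Fin n → ℝ) (hx : ∀ t, 0 ≤ t → ∀ i, 0 < x t i)
    (Bsup : ℝ) (hBsup : ∀ t, 0 ≤ t → β ⬝ᵥ x t ≤ Bsup)
    (hbound : ∃ M : ℝ, ∀ t, 0 ≤ t → ∀ i, x t i ≤ M)
    (S : ℝ → ℝ)
    (hS : ∀ t, 0 ≤ t → HasDerivAt S
      (-(S t) * (β ⬝ᵥ x t) + g * (S t)^2
        - (μ - β ⬝ᵥ (1 : Fin n → ℝ) + g * κ) * S t + κ * μ) t)
    (ε : ℝ) (hε : 0 < ε)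
    (hρ : 0 < κ * μ - (Bsup + μ - β ⬝ᵥ (1 : Fin n → ℝ) + g * κ) * ε) :
    ∃ t₀ : ℝ, 0 ≤ t₀ ∧ ∀ t, t₀ ≤ t → ε ≤ S t := by
  set B1 : ℝ := β ⬝ᵥ (1 : Fin n → ℝ) with hB1
  set ρ : ℝ := κ * μ - (Bsup + μ - B1 + g * κ) * ε with hρdef
  have hρpos : 0 < ρ := hρ
  have hc : 0 ≤ μ - B1 + g * κ := by linarith
  have hBnn : ∀ t, 0 ≤ t → 0 ≤ β ⬝ᵥ x t := by
    intro t ht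
    exact Finset.sum_nonneg fun i _ => mul_nonneg (hβ i) (hx t ht i).le
  have hBsup0 : 0 ≤ Bsup := le_trans (hBnn 0 le_rfl) (hBsup 0 le_rfl)
  -- derivative lower bound when S ≤ ε
  have hderiv_lb : ∀ t, 0 ≤ t → S t ≤ ε → ρ ≤ deriv S t := by
    intro t ht hSe
    rw [(hS t ht).deriv]
    have hB0 : 0 ≤ β ⬝ᵥ x t := hBnn t ht
    have hBle : β ⬝ᵥ x t ≤ Bsup := hBsup t ht
    rcases le_or_gt 0 (S t) with h0 | h0
    · nlinarith [mul_nonneg hg (sq_nonneg (S t)), mul_nonneg (sub_nonneg.2 hSe) hBsup0,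
        mul_nonneg h0 (sub_nonneg.2 hBle), mul_nonneg hc (sub_nonneg.2 hSe)]
    · nlinarith [mul_nonneg hg (sq_nonneg (S t)), mul_nonneg hε.le hBsup0,
        mul_nonneg (neg_nonneg.2 h0.le) hB0, mul_nonneg hc (sub_nonneg.2 hSe)]
  -- growth estimate on intervals where S ≤ ε
  have grow : ∀ a b : ℝ, 0 ≤ a → a ≤ b → (∀ s ∈ Set.Icc a b, S s ≤ ε) →
      ρ * (b - a) ≤ S b - S a := by
    intro a b ha hab hle
    have hcont : ContinuousOn S (Set.Icc a b) := fun s hs =>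
      ((hS s (ha.trans hs.1)).continuousAt).continuousWithinAt
    have hdiff : DifferentiableOn ℝ S (interior (Set.Icc a b)) := by
      rw [interior_Icc]
      exact fun s hs => ((hS s (ha.trans hs.1.le)).differentiableAt).differentiableWithinAt
    refine (convex_Icc a b).mul_sub_le_image_sub_of_le_deriv hcont hdiff ?_ a
      (Set.left_mem_Icc.2 hab) b (Set.right_mem_Icc.2 hab) hab
    rw [interior_Icc]
    intro s hs
    exact hderiv_lb s (ha.trans hs.1.le) (hle s (Set.Ioo_subset_Icc_self hs))
  -- Step 1 : S reaches ε at some time t₁ ≥ 0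
  have step1 : ∃ t₁ : ℝ, 0 ≤ t₁ ∧ ε ≤ S t₁ := by
    by_contra h
    push_neg at h
    set T : ℝ := max 0 ((ε - S 0) / ρ + 1) with hT
    have hT0 : 0 ≤ T := le_max_left _ _
    have hgrow := grow 0 T le_rfl hT0 (fun s hs => (h s hs.1).le)
    have hTle : (ε - S 0) / ρ + 1 ≤ T := le_max_right _ _
    have : ε - S 0 + ρ ≤ ρ * T := by
      have := mul_le_mul_of_nonneg_left hTle hρpos.le
      calc ε - S 0 + ρ = ρ * ((ε - S 0) / ρ + 1) := by
            rw [mul_add, mul_one, mul_div_cancel₀ _ hρpos.ne']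
        _ ≤ ρ * T := this
    have hST : S T < ε := h T hT0
    simp only [sub_zero] at hgrow
    linarith
  obtain ⟨t₁, ht₁0, ht₁⟩ := step1
  refine ⟨t₁, ht₁0, ?_⟩
  -- Step 2 : S stays ≥ ε after t₁
  intro t ht
  by_contra hlt
  push_neg at hlt
  set A : Set ℝ := {s | s ∈ Set.Icc t₁ t ∧ ε ≤ S s} with hA
  have hAne : A.Nonempty := ⟨t₁, ⟨le_rfl, ht⟩, ht₁⟩
  have hcontIcc : ContinuousOn S (Set.Icc t₁ t) := fun s hs =>
    ((hS s (ht₁0.trans hs.1)).continuousAt).continuousWithinAt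
  have hAclosed : IsClosed A := by
    have : A = Set.Icc t₁ t ∩ S ⁻¹' Set.Ici ε := by
      ext s; simp [hA, Set.mem_Ici, and_comm]
    rw [this]
    exact hcontIcc.preimage_isClosed_of_isClosed isClosed_Icc isClosed_Ici
  have hAcomp : IsCompact A := (isCompact_Icc).of_isClosed_subset hAclosed (fun s hs => hs.1)
  have hmem := hAcomp.sSup_mem hAne
  set s₀ : ℝ := sSup A with hs₀
  obtain ⟨⟨hs₀l, hs₀r⟩, hs₀S⟩ := hmem
  have hs₀lt : s₀ < t := by
    rcases lt_or_eq_of_le hs₀r with h' | h'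
    · exact h'
    · rw [h'] at hs₀S; linarith
  -- all points in (s₀, t] have S < ε
  have hIoc : ∀ s ∈ Set.Ioc s₀ t, S s < ε := by
    intro s hs
    by_contra hge
    push_neg at hge
    have : s ∈ A := ⟨⟨hs₀l.trans hs.1.le, hs.2⟩, hge⟩
    have := le_csSup hAcomp.bddAbove this
    exact absurd this (not_le.2 hs.1)
  -- S s₀ ≤ ε by right continuity
  have hSs₀le : S s₀ ≤ ε := by
    have htend : Filter.Tendsto S (nhdsWithin s₀ (Set.Ioi s₀)) (nhds (S s₀)) :=
      ((hS s₀ (ht₁0.trans hs₀l)).continuousAt).continuousWithinAt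
    refine le_of_tendsto htend ?_
    filter_upwards [Ioc_mem_nhdsGT hs₀lt] with s hs
    exact (hIoc s hs).le
  have hgrow := grow s₀ t (ht₁0.trans hs₀l) hs₀lt.le (by
    intro s hs
    rcases eq_or_lt_of_le hs.1 with h' | h'
    · rw [← h']; exact hSs₀le
    · exact (hIoc s ⟨h', hs.2⟩).le)
  nlinarith [mul_pos hρpos (sub_pos.2 hs₀lt)]
end
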